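/- arXiv:2001.10075 — 2 statements merged into one kernel-verified Lean document; each statement's English description precedes it below -/
import Mathlib

section
/- Let E0 be a commutative ring and let C0 be a commutative Q-algebra which is an E0-algebra. Let A be a finite abelian group, and for each pair of homomorphisms (s : Z_p^h → A, t : Z_p^n → A), write the product ring P = ∏_{(s,t)} C0. For a proper subgroup A' ⊊ A, define Tr_{A'} : (∏_{(s',t') : Z_p^h×Z_p^n → A'} C0) → P by sending the (s',t')-component to |A/A'| times itself, placed in the component of the composites with A' ↪ A, zero elsewhere. Then the quotient of P by the ideal generated by the images of Tr_{A'} over all proper subgroups A' is isomorphic to the product of copies of C0 indexed by pairs (s,t) such that im(s) and im(t) together generate A. -/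
/-!
An element of the product ring lies in the ideal generated by the transfers iff it vanishes at
every pair `(s, t)` whose images generate `A`. Indeed a transfer from a proper subgroup `A'` is
supported on the pairs factoring through `A'`, none of which generate `A`. Conversely, a function
vanishing on the generating pairs is the sum, over the proper subgroups `B`, of its parts on the
pairs generating exactly `B`, and the part for `B` is the transfer from `B` of itself divided by
`|A/B|`, a unit in a `ℚ`-algebra. The quotient is then the image of the restriction to the
generating pairs.
-/

open scoped Classical

variable {p n h : ℕ} [Fact p.Prime] {A : Type*} [AddCommGroup A]

/-- The index set of pairs of homomorphisms `(s : ℤ_p^h → A, t : ℤ_p^n → A)`. -/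
abbrev PairIdx (p h n : ℕ) [Fact p.Prime] (A : Type*) [AddCommGroup A] : Type _ :=
  ((Fin h → ℤ_[p]) →+ A) × ((Fin n → ℤ_[p]) →+ A)

/-- The transfer map associated to a subgroup `A' ≤ A`: it sends a tuple indexed by
pairs of homomorphisms into `A'` to the tuple indexed by pairs of homomorphisms into
`A` which, at a pair `(s, t)` factoring through `A'`, is `|A/A'|` times the value at
the restricted pair, and is `0` at all other pairs. -/
noncomputable def transferMap (p h n : ℕ) [Fact p.Prime] (A : Type*) [AddCommGroup A]
    (C0 : Type*) [CommRing C0] (A' : AddSubgroup A) :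
    (PairIdx p h n A' → C0) → (PairIdx p h n A → C0) := fun φ i =>
  if hst : (∀ x, i.1 x ∈ A') ∧ (∀ x, i.2 x ∈ A') then
    (Nat.card (A ⧸ A') : C0) *
      φ (i.1.codRestrict A' hst.1, i.2.codRestrict A' hst.2)
  else 0

theorem AddMonoidHom.range_sup_range_le_iff {M N : Type*} [AddGroup M] [AddGroup N]
    (f : M →+ A) (g : N →+ A) (B : AddSubgroup A) :
    f.range ⊔ g.range ≤ B ↔ (∀ x, f x ∈ B) ∧ ∀ x, g x ∈ B := by
  rw [sup_le_iff]
  simp only [SetLike.le_def, AddMonoidHom.mem_range, forall_exists_index, forall_apply_eq_imp_iff]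

noncomputable def PairIdx.mapSubtype (A' : AddSubgroup A) (j : PairIdx p h n A') :
    PairIdx p h n A :=
  (A'.subtype.comp j.1, A'.subtype.comp j.2)

theorem transferMap_apply_mapSubtype (C0 : Type*) [CommRing C0] (A' : AddSubgroup A)
    (g : PairIdx p h n A → C0) (i : PairIdx p h n A) :
    transferMap p h n A C0 A' (fun j => g (j.mapSubtype A')) i =
      if i.1.range ⊔ i.2.range ≤ A' then (Nat.card (A ⧸ A') : C0) * g i else 0 := by
  unfold transferMap
  simp only [AddMonoidHom.range_sup_range_le_iff]
  split_ifs <;> rfl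

section restrict

variable {ι : Type*} (R : Type*) [Semiring R]

def Pi.restrictRingHom (P : ι → Prop) :
    (ι → R) →+* ({i // P i} → R) :=
  RingHom.pi fun i => Pi.evalRingHom (fun _ => R) i.1

variable {R}

theorem Pi.restrictRingHom_surjective (P : ι → Prop) :
    Function.Surjective (Pi.restrictRingHom R P) := fun g =>
  ⟨fun i => if hi : P i then g ⟨i, hi⟩ else 0, funext fun i => dif_pos i.2⟩

theorem Pi.mem_ker_restrictRingHom {P : ι → Prop} {f : ι → R} :
    f ∈ RingHom.ker (Pi.restrictRingHom R P) ↔ ∀ i, P i → f i = 0 := by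
  simp [RingHom.mem_ker, funext_iff, Pi.restrictRingHom]

end restrict

section transfer

variable (C0 : Type*) [CommRing C0]

theorem transferMap_apply_eq_zero {A' : AddSubgroup A} (hA' : A' ≠ ⊤)
    (φ : PairIdx p h n A' → C0) {i : PairIdx p h n A} (hi : i.1.range ⊔ i.2.range = ⊤) :
    transferMap p h n A C0 A' φ i = 0 := by
  unfold transferMap
  rw [dif_neg]
  rw [← AddMonoidHom.range_sup_range_le_iff, hi, top_le_iff]
  exact hA'

theorem span_range_transferMap_le_ker :
    Ideal.span (⋃ A' ∈ {A' : AddSubgroup A | A' ≠ ⊤},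
        Set.range (transferMap p h n A C0 A')) ≤
      RingHom.ker
        (Pi.restrictRingHom C0 fun i : PairIdx p h n A => i.1.range ⊔ i.2.range = ⊤) := by
  simp only [Ideal.span_le, Set.iUnion_subset_iff, Set.range_subset_iff]
  intro A' hA' φ
  exact Pi.mem_ker_restrictRingHom.2 fun i hi => transferMap_apply_eq_zero C0 hA' φ hi

noncomputable def exactSpanPart (B : AddSubgroup A) (f : PairIdx p h n A → C0) :
    PairIdx p h n A → C0 := fun i =>
  if i.1.range ⊔ i.2.range = B then Ring.inverse (Nat.card (A ⧸ B) : C0) * f i else 0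

variable {C0}

theorem transferMap_exactSpanPart {B : AddSubgroup A} (hB : IsUnit (Nat.card (A ⧸ B) : C0))
    (f : PairIdx p h n A → C0) (i : PairIdx p h n A) :
    transferMap p h n A C0 B (fun j => exactSpanPart C0 B f (j.mapSubtype B)) i =
      if i.1.range ⊔ i.2.range = B then f i else 0 := by
  rw [transferMap_apply_mapSubtype, exactSpanPart]
  split_ifs with hle heq heq'
  · rw [← mul_assoc, Ring.mul_inverse_cancel _ hB, one_mul]
  · exact mul_zero _
  · exact absurd heq'.le hle
  · rfl

theorem ker_le_span_range_transferMap [Finite A]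
    (hunit : ∀ A' : AddSubgroup A, A' ≠ ⊤ → IsUnit (Nat.card (A ⧸ A') : C0)) :
    RingHom.ker (Pi.restrictRingHom C0 fun i : PairIdx p h n A => i.1.range ⊔ i.2.range = ⊤) ≤
      Ideal.span (⋃ A' ∈ {A' : AddSubgroup A | A' ≠ ⊤},
        Set.range (transferMap p h n A C0 A')) := by
  intro f hf
  have := Fintype.ofFinite (AddSubgroup A)
  let proper := Finset.univ.filter fun B : AddSubgroup A => B ≠ ⊤
  have hdecomp : f = ∑ B ∈ proper,
      transferMap p h n A C0 B (fun j => exactSpanPart C0 B f (j.mapSubtype B)) := by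
    funext i
    rw [Finset.sum_apply, Finset.sum_congr rfl fun B hB =>
      transferMap_exactSpanPart (hunit B (Finset.mem_filter.1 hB).2) f i, Finset.sum_ite_eq]
    by_cases hi : i.1.range ⊔ i.2.range = ⊤
    · rw [Pi.mem_ker_restrictRingHom.1 hf i hi, ite_self]
    · rw [if_pos (by simpa [proper] using hi)]
  rw [hdecomp]
  refine Ideal.sum_mem _ fun B hB => Ideal.subset_span ?_
  exact Set.mem_biUnion (Finset.mem_filter.1 hB).2 (Set.mem_range_self _)

theorem span_range_transferMap_eq_ker [Finite A]
    (hunit : ∀ A' : AddSubgroup A, A' ≠ ⊤ → IsUnit (Nat.card (A ⧸ A') : C0)) :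
    Ideal.span (⋃ A' ∈ {A' : AddSubgroup A | A' ≠ ⊤},
        Set.range (transferMap p h n A C0 A')) =
      RingHom.ker
        (Pi.restrictRingHom C0 fun i : PairIdx p h n A => i.1.range ⊔ i.2.range = ⊤) :=
  le_antisymm (span_range_transferMap_le_ker C0) (ker_le_span_range_transferMap hunit)

end transfer

theorem isUnit_natCast_card_quotient (C0 : Type*) [CommRing C0] [Algebra ℚ C0] [Finite A]
    (B : AddSubgroup A) : IsUnit (Nat.card (A ⧸ B) : C0) := by
  rw [← map_natCast (algebraMap ℚ C0)]
  exact (IsUnit.mk0 _ (Nat.cast_ne_zero.2 Nat.card_pos.ne')).map _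

theorem stmt15_general (C0 : Type*) [CommRing C0] [Algebra ℚ C0]
    [Fintype A] :
    Nonempty
      (((PairIdx p h n A → C0) ⧸
          Ideal.span (⋃ A' ∈ {A' : AddSubgroup A | A' ≠ ⊤},
            Set.range (transferMap p h n A C0 A'))) ≃+*
        ({i : PairIdx p h n A // i.1.range ⊔ i.2.range = ⊤} → C0)) :=
  ⟨(Ideal.quotEquivOfEq
      (span_range_transferMap_eq_ker fun B _ => isUnit_natCast_card_quotient C0 B)).trans
    (RingHom.quotientKerEquivOfSurjective (Pi.restrictRingHom_surjective _))⟩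

/-- Let `C0` be a commutative `ℚ`-algebra which is an algebra over a commutative ring
`E0`, and `A` a finite abelian group.  The quotient of the product ring
`P = ∏_{(s,t)} C0`, indexed by pairs of homomorphisms `(s : ℤ_p^h → A, t : ℤ_p^n → A)`,
by the ideal generated by the images of the transfer maps from all proper subgroups
`A' ⊊ A`, is isomorphic to the product of copies of `C0` indexed by the pairs `(s,t)`
such that `im s` and `im t` together generate `A`. -/
theorem stmt15 (E0 C0 : Type*) [CommRing E0] [CommRing C0] [Algebra ℚ C0]
    [Algebra E0 C0] [Fintype A] :
    Nonempty
      (((PairIdx p h n A → C0) ⧸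
          Ideal.span (⋃ A' ∈ {A' : AddSubgroup A | A' ≠ ⊤},
            Set.range (transferMap p h n A C0 A'))) ≃+*
        ({i : PairIdx p h n A // i.1.range ⊔ i.2.range = ⊤} → C0)) :=
  stmt15_general C0
end

section
/- Over the 2-adic K-theory coefficient ring R = Z_2 (with formal group law x + y + xy), in the ring R[[x,y]]/(x² + 2x, y² + 2y), the ideal generated by x + 2, y + 2, and xy + x + y + 2 equals the ideal (2, x, y), and the quotient ring is F_2. -/
/-!
The identity `2 = (x + 2) + (y + 2) + (xy + x + y + 2) - (x + 2)(y + 2)` shows that the two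
ideals agree in any commutative ring. Since `x² + 2x` and `y² + 2y` lie in `(2, x, y)`, the
quotient is `ℤ₂[[x, y]] ⧸ (2, x, y)`, which is `𝔽₂` via the constant coefficient mod `2`.
-/

open MvPowerSeries

theorem Ideal.span_add_two_eq_span_two {R : Type*} [CommRing R] (a b : R) :
    Ideal.span {a + 2, b + 2, a * b + a + b + 2} = Ideal.span ({2, a, b} : Set R) := by
  refine le_antisymm (span_le.2 ?_) (span_le.2 ?_) <;>
    simp only [Set.insert_subset_iff, Set.singleton_subset_iff, SetLike.mem_coe]
  · have h2 : (2 : R) ∈ Ideal.span ({2, a, b} : Set R) := subset_span (by simp)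
    have ha : a ∈ Ideal.span ({2, a, b} : Set R) := subset_span (by simp)
    have hb : b ∈ Ideal.span ({2, a, b} : Set R) := subset_span (by simp)
    exact ⟨add_mem ha h2, add_mem hb h2,
      add_mem (add_mem (add_mem (mul_mem_right b _ ha) ha) hb) h2⟩
  · set J := Ideal.span ({a + 2, b + 2, a * b + a + b + 2} : Set R)
    have ha2 : a + 2 ∈ J := subset_span (by simp)
    have hb2 : b + 2 ∈ J := subset_span (by simp)
    have hab : a * b + a + b + 2 ∈ J := subset_span (by simp)
    have h2 : (2 : R) ∈ J := by
      rw [show (2 : R) = (a + 2) + (b + 2) + (a * b + a + b + 2) - (a + 2) * (b + 2) by ring]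
      exact sub_mem (add_mem (add_mem ha2 hb2) hab) (J.mul_mem_right _ ha2)
    exact ⟨h2, by simpa using sub_mem ha2 h2, by simpa using sub_mem hb2 h2⟩

namespace MvPowerSeries

theorem mem_span_X_of_constantCoeff_eq_zero {R : Type*} [CommSemiring R]
    {f : MvPowerSeries (Fin 2) R} (hf : constantCoeff f = 0) :
    f ∈ Ideal.span {X 0, X 1} := by
  classical
  let f₀ : MvPowerSeries (Fin 2) R := fun d => if d 0 = 0 then 0 else coeff d f
  let f₁ : MvPowerSeries (Fin 2) R := fun d => if d 0 = 0 then coeff d f else 0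
  have hsum : f = f₀ + f₁ := by
    ext d
    change coeff d f = (if d 0 = 0 then 0 else coeff d f) + (if d 0 = 0 then coeff d f else 0)
    split_ifs <;> simp
  have h₀ : X 0 ∣ f₀ := X_dvd_iff.2 fun m hm => if_pos hm
  have h₁ : X 1 ∣ f₁ := X_dvd_iff.2 fun m hm => by
    change (if m 0 = 0 then coeff m f else 0) = 0
    split_ifs with h
    · obtain rfl : m = 0 := by ext i; fin_cases i <;> assumption
      rwa [coeff_zero_eq_constantCoeff_apply]
    · rfl
  rw [hsum]
  exact add_mem (Ideal.span_mono (by simp) (Ideal.mem_span_singleton.2 h₀))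
    (Ideal.span_mono (by simp) (Ideal.mem_span_singleton.2 h₁))

theorem ker_toZMod_comp_constantCoeff (p : ℕ) [Fact p.Prime] :
    RingHom.ker (PadicInt.toZMod.comp constantCoeff : MvPowerSeries (Fin 2) ℤ_[p] →+* ZMod p) =
      Ideal.span {(p : MvPowerSeries (Fin 2) ℤ_[p]), X 0, X 1} := by
  refine le_antisymm (fun f hf => ?_) (Ideal.span_le.2 ?_)
  · obtain ⟨c, hc⟩ : (p : ℤ_[p]) ∣ constantCoeff f := by
      rwa [← Ideal.mem_span_singleton, ← PadicInt.maximalIdeal_eq_span_p,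
        ← PadicInt.ker_toZMod]
    have hX : f - C (constantCoeff f) ∈ Ideal.span {X 0, X 1} :=
      mem_span_X_of_constantCoeff_eq_zero (by simp)
    rw [← sub_add_cancel f (C (constantCoeff f))]
    refine add_mem (Ideal.span_mono (Set.subset_insert _ _) hX) ?_
    rw [hc, map_mul, map_natCast]
    exact Ideal.mul_mem_right _ _ (Ideal.subset_span (by simp))
  · simp [Set.insert_subset_iff]

theorem toZMod_comp_constantCoeff_surjective (p : ℕ) [Fact p.Prime] :
    Function.Surjective
      (PadicInt.toZMod.comp constantCoeff : MvPowerSeries (Fin 2) ℤ_[p] →+* ZMod p) :=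
  fun z => ⟨C (z.val : ℤ_[p]), by simp⟩

end MvPowerSeries

/-- In `ℤ_2[[x,y]]/(x² + 2x, y² + 2y)` (the 2-adic K-theory of `B(ℤ/2 × ℤ/2)` with
the multiplicative formal group law `x + y + xy`), the ideal generated by `x + 2`,
`y + 2` and `xy + x + y + 2` equals the ideal `(2, x, y)`, and the quotient by this
ideal is `𝔽₂`. -/
theorem stmt17
    (I : Ideal (MvPowerSeries (Fin 2) ℤ_[2]))
    (hI : I = Ideal.span {(X 0) ^ 2 + 2 * X 0, (X 1) ^ 2 + 2 * X 1})
    (x y : MvPowerSeries (Fin 2) ℤ_[2] ⧸ I)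
    (hx : x = Ideal.Quotient.mk I (X 0)) (hy : y = Ideal.Quotient.mk I (X 1)) :
    Ideal.span {x + 2, y + 2, x * y + x + y + 2} =
        Ideal.span ({2, x, y} : Set (MvPowerSeries (Fin 2) ℤ_[2] ⧸ I)) ∧
      Nonempty
        (((MvPowerSeries (Fin 2) ℤ_[2] ⧸ I) ⧸
            Ideal.span ({x + 2, y + 2, x * y + x + y + 2} :
              Set (MvPowerSeries (Fin 2) ℤ_[2] ⧸ I))) ≃+* ZMod 2) := by
  rw [Ideal.span_add_two_eq_span_two]
  refine ⟨rfl, ?_⟩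
  set J := Ideal.span {((2 : ℕ) : MvPowerSeries (Fin 2) ℤ_[2]), X 0, X 1}
  have hIJ : I ≤ J := by
    have hX₀ : X 0 ∈ J := Ideal.subset_span (by simp)
    have hX₁ : X 1 ∈ J := Ideal.subset_span (by simp)
    rw [hI, Ideal.span_le, Set.insert_subset_iff, Set.singleton_subset_iff]
    exact ⟨add_mem (J.pow_mem_of_mem hX₀ 2 two_pos) (J.mul_mem_left _ hX₀),
      add_mem (J.pow_mem_of_mem hX₁ 2 two_pos) (J.mul_mem_left _ hX₁)⟩
  have hJ : J.map (Ideal.Quotient.mk I) = Ideal.span {2, x, y} := by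
    simp [J, Ideal.map_span, Set.image_insert_eq, hx, hy, map_ofNat]
  rw [← hJ]
  exact ⟨(DoubleQuot.quotQuotEquivQuotOfLE hIJ).trans <|
    (Ideal.quotEquivOfEq (ker_toZMod_comp_constantCoeff 2).symm).trans <|
      RingHom.quotientKerEquivOfSurjective (toZMod_comp_constantCoeff_surjective 2)⟩
end
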